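/- For every matrix x ∈ M_n(ℂ), v · (x ⊗ₖ 1) · vᴴ = Σ_{k∈Fin n} (w^k · x · (w^k)ᴴ) ⊗ₖ f_k; in particular, for every j ∈ Fin n, v · (e_j ⊗ₖ 1) · vᴴ = Σ_{k∈Fin n} e_{j−k} ⊗ₖ f_k (subtraction in Fin n). -/

import Mathlib

open Matrix Kronecker

noncomputable section

/-- The primitive `n`-th root of unity `exp(2πi/n)`. -/
def omega (n : ℕ) : ℂ := Complex.exp (2 * Real.pi * Complex.I / n)

/-- The diagonal matrix unit `e_i` with a `1` in entry `(i,i)`. -/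
def eM (n : ℕ) (i : Fin n) : Matrix (Fin n) (Fin n) ℂ := Matrix.single i i 1

/-- The cyclic shift matrix `w`, with `w(a,b) = 1` iff `b = a + 1` (mod `n`). -/
def wM (n : ℕ) [NeZero n] : Matrix (Fin n) (Fin n) ℂ :=
  Matrix.of fun a b => if b = a + 1 then 1 else 0

/-- The spectral projections `f_k = (1/n) Σ_j ω^{-jk} w^j` of `w`. -/
def fM (n : ℕ) [NeZero n] (k : Fin n) : Matrix (Fin n) (Fin n) ℂ :=
  ((n : ℂ))⁻¹ • ∑ j : Fin n, (omega n ^ ((j : ℕ) * (k : ℕ)))⁻¹ • wM n ^ (j : ℕ)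

/-- The normalized trace of a square matrix: the trace divided by the size. -/
def nτ {ι : Type*} [Fintype ι] (A : Matrix ι ι ℂ) : ℂ :=
  Matrix.trace A / (Fintype.card ι)

/-- The `N`-fold elementary tensor `A_0 ⊗ ⋯ ⊗ A_{N-1}` of `n × n` matrices,
realized as a matrix indexed by functions `Fin N → Fin n`. -/
def tens (n N : ℕ) (A : Fin N → Matrix (Fin n) (Fin n) ℂ) :
    Matrix (Fin N → Fin n) (Fin N → Fin n) ℂ :=
  Matrix.of fun x y => ∏ k, A k (x k) (y k)

/-- `u_s = 1^{⊗(s-1)} ⊗ v ⊗ 1^{⊗…}` where `v = Σ_i w^i ⊗ f_i` occupies factors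
`s-1` and `s` of the `N`-fold tensor power. -/
def uM (n N : ℕ) [NeZero n] (s : ℕ) : Matrix (Fin N → Fin n) (Fin N → Fin n) ℂ :=
  ∑ i : Fin n, tens n N fun k =>
    if (k : ℕ) + 1 = s then wM n ^ (i : ℕ)
    else if (k : ℕ) = s then fM n i
    else 1

/-- `U_m = u_1 u_2 ⋯ u_m` inside the `N`-fold tensor power. -/
def UM (n N m : ℕ) [NeZero n] : Matrix (Fin N → Fin n) (Fin N → Fin n) ℂ :=
  (((List.range m).map fun s => uM n N (s + 1))).prod

/-- `F_r = f_r ⊗ 1 ⊗ ⋯ ⊗ 1` inside the `N`-fold tensor power. -/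
def FM (n N : ℕ) [NeZero n] (r : Fin n) : Matrix (Fin N → Fin n) (Fin N → Fin n) ℂ :=
  tens n N fun k => if (k : ℕ) = 0 then fM n r else 1

/-- `E(i) = e_{i_1} ⊗ ⋯ ⊗ e_{i_m} ⊗ 1 ⊗ ⋯ ⊗ 1` inside the `N`-fold tensor power,
with the `e`'s occupying factors `0, …, m-1`. -/
def EM (n N m : ℕ) (i : Fin m → Fin n) : Matrix (Fin N → Fin n) (Fin N → Fin n) ℂ :=
  tens n N fun k => if h : (k : ℕ) < m then eM n (i ⟨(k : ℕ), h⟩) else 1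

/-- `v = Σ_i w^i ⊗ₖ f_i ∈ M_n(ℂ) ⊗ M_n(ℂ)`, via the Kronecker product. -/
def vM (n : ℕ) [NeZero n] : Matrix (Fin n × Fin n) (Fin n × Fin n) ℂ :=
  ∑ i : Fin n, (wM n ^ (i : ℕ)) ⊗ₖ fM n i

/-!
Each `f_k` is the average `(1/n) ∑_{j<n} b^j` of the powers of `b = ω^{-k} w`, an element with
`b^n = 1` and `bᴴ b = 1`; such an average is fixed by `b` (a geometric sum), hence idempotent and
self-adjoint, and `w f_k = ω^k f_k`. Since `ω` is primitive, `f_i` and `f_j` are eigenvectors of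
multiplication by `w` for the distinct eigenvalues `ω^i ≠ ω^j` when `i ≠ j`, so `f_i f_j = 0`;
thus all cross terms of `v (x ⊗ 1) vᴴ` vanish. Finally `w^k` is the permutation matrix of
`a ↦ a + k`, and conjugating `e_j` by it gives `e_{j-k}`.
-/

open Finset

section PowAverage

variable {A : Type*} [Ring A] [Algebra ℂ A]

def powAverage (n : ℕ) (b : A) : A := (n : ℂ)⁻¹ • ∑ j ∈ range n, b ^ j

variable {n : ℕ} {b c a : A}

lemma mul_powAverage (hb : b ^ n = 1) : b * powAverage n b = powAverage n b := by
  have hfix : b * ∑ j ∈ range n, b ^ j = ∑ j ∈ range n, b ^ j := by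
    have h := mul_neg_geom_sum b n
    rw [hb, sub_self, sub_mul, one_mul, sub_eq_zero] at h
    exact h.symm
  rw [powAverage, mul_smul_comm, hfix]

lemma powAverage_mul_of_mul_eq (hn : n ≠ 0) (h : c * a = a) : powAverage n c * a = a := by
  have hpow : ∀ j : ℕ, c ^ j * a = a := fun j => by
    induction j with
    | zero => rw [pow_zero, one_mul]
    | succ j ih => rw [pow_succ, mul_assoc, h, ih]
  rw [powAverage, smul_mul_assoc, sum_mul, sum_congr rfl fun j _ => hpow j, sum_const,
    card_range, ← Nat.cast_smul_eq_nsmul ℂ, smul_smul, inv_mul_cancel₀ (by exact_mod_cast hn),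
    one_smul]

lemma powAverage_mul_self (hn : n ≠ 0) (hb : b ^ n = 1) :
    powAverage n b * powAverage n b = powAverage n b :=
  powAverage_mul_of_mul_eq hn (mul_powAverage hb)

lemma commute_powAverage (h : Commute c b) : Commute c (powAverage n b) :=
  ((Commute.sum_right _ _ _ fun j _ => h.pow_right j)).smul_right _

variable [StarRing A] [StarModule ℂ A]

lemma star_powAverage : star (powAverage n b) = powAverage n (star b) := by
  simp only [powAverage, star_smul, star_sum, star_pow, star_inv₀, star_natCast]

lemma isSelfAdjoint_powAverage (hn : n ≠ 0) (hb : b ^ n = 1) (hstar : star b * b = 1) :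
    IsSelfAdjoint (powAverage n b) := by
  have hfix : star b * powAverage n b = powAverage n b := by
    conv_lhs => rw [← mul_powAverage hb, ← mul_assoc, hstar, one_mul]
  have h : star (powAverage n b) * powAverage n b = powAverage n b := by
    rw [star_powAverage]; exact powAverage_mul_of_mul_eq hn hfix
  have hsa : IsSelfAdjoint (star (powAverage n b) * powAverage n b) := .star_mul_self _
  rwa [h] at hsa

end PowAverage

lemma mul_eq_zero_of_eigenvalue_ne {A : Type*} [Ring A] [Algebra ℂ A] {u a b : A} {α β : ℂ}
    (ha : a * u = α • a) (hb : u * b = β • b) (hαβ : α ≠ β) : a * b = 0 := by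
  have h : α • (a * b) = β • (a * b) := by
    rw [← smul_mul_assoc, ← ha, mul_assoc, hb, mul_smul_comm]
  rw [← sub_eq_zero, ← sub_smul, smul_eq_zero] at h
  exact h.resolve_left (sub_ne_zero.mpr hαβ)

section SpectralProj

variable {A : Type*} [Ring A] [Algebra ℂ A]

def spectralProj (n : ℕ) (u : A) (ζ : ℂ) (k : ℕ) : A := powAverage n ((ζ ^ k)⁻¹ • u)

variable {n : ℕ} {u : A} {ζ : ℂ}

lemma inv_pow_smul_pow_eq_one (hu : u ^ n = 1) (hζ : ζ ^ n = 1) (k : ℕ) :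
    ((ζ ^ k)⁻¹ • u) ^ n = 1 := by
  rw [smul_pow, hu, inv_pow, ← pow_mul, mul_comm, pow_mul, hζ, one_pow, inv_one, one_smul]

lemma mul_spectralProj (hn : n ≠ 0) (hu : u ^ n = 1) (hζ : ζ ^ n = 1) (k : ℕ) :
    u * spectralProj n u ζ k = ζ ^ k • spectralProj n u ζ k := by
  have hζ0 : ζ ^ k ≠ 0 := pow_ne_zero k (ne_zero_pow hn (by rw [hζ]; exact one_ne_zero))
  have h := mul_powAverage (inv_pow_smul_pow_eq_one hu hζ k)
  rwa [smul_mul_assoc, inv_smul_eq_iff₀ hζ0] at h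

lemma spectralProj_mul_comm (k : ℕ) : spectralProj n u ζ k * u = u * spectralProj n u ζ k :=
  (commute_powAverage ((Commute.refl u).smul_right _)).eq.symm

lemma spectralProj_mul_self (hn : n ≠ 0) (hu : u ^ n = 1) (hζ : ζ ^ n = 1) (k : ℕ) :
    spectralProj n u ζ k * spectralProj n u ζ k = spectralProj n u ζ k :=
  powAverage_mul_self hn (inv_pow_smul_pow_eq_one hu hζ k)

lemma spectralProj_mul_spectralProj_of_ne (hn : n ≠ 0) (hu : u ^ n = 1)
    (hζ : IsPrimitiveRoot ζ n) {i j : ℕ} (hi : i < n) (hj : j < n) (hij : i ≠ j) :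
    spectralProj n u ζ i * spectralProj n u ζ j = 0 :=
  mul_eq_zero_of_eigenvalue_ne
    (by rw [spectralProj_mul_comm, mul_spectralProj hn hu hζ.pow_eq_one])
    (mul_spectralProj hn hu hζ.pow_eq_one j) fun h => hij (hζ.pow_inj hi hj h)

lemma isSelfAdjoint_spectralProj [StarRing A] [StarModule ℂ A] (hn : n ≠ 0) (hu : u ^ n = 1)
    (hζ : ζ ^ n = 1) (hstar : star u * u = 1) (k : ℕ) :
    IsSelfAdjoint (spectralProj n u ζ k) := by
  refine isSelfAdjoint_powAverage hn (inv_pow_smul_pow_eq_one hu hζ k) ?_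
  have hnorm : ‖(ζ ^ k)⁻¹‖ = 1 := by
    rw [norm_inv, norm_pow, Complex.norm_eq_one_of_pow_eq_one hζ hn, one_pow, inv_one]
  rw [star_smul, smul_mul_smul_comm, hstar, ← starRingEnd_apply, Complex.conj_mul', hnorm,
    Complex.ofReal_one, one_pow, one_smul]

end SpectralProj

lemma sum_kronecker_conj_kronecker_one {ι m l R : Type*} [Fintype ι] [DecidableEq ι]
    [Fintype m] [Fintype l] [DecidableEq l] [CommRing R] [StarRing R]
    (a : ι → Matrix m m R) (p : ι → Matrix l l R)
    (hp : ∀ i j, p i * (p j)ᴴ = if i = j then p i else 0) (x : Matrix m m R) :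
    (∑ i, a i ⊗ₖ p i) * (x ⊗ₖ 1) * (∑ i, a i ⊗ₖ p i)ᴴ = ∑ i, (a i * x * (a i)ᴴ) ⊗ₖ p i := by
  simp only [conjTranspose_sum, sum_mul, mul_sum, conjTranspose_kronecker, ← mul_kronecker_mul,
    Matrix.mul_one, hp, apply_ite (kroneckerMap _ _), kronecker_zero, sum_ite_eq', mem_univ,
    if_true]

lemma permMatrix_mul_single_mul_conjTranspose {m R : Type*} [Fintype m] [DecidableEq m]
    [Semiring R] [StarRing R] (σ : Equiv.Perm m) (i j : m) (r : R) :
    σ.permMatrix R * single i j r * (σ.permMatrix R)ᴴ = single (σ.symm i) (σ.symm j) r := by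
  rw [conjTranspose_permMatrix, PEquiv.toMatrix_toPEquiv_mul, PEquiv.mul_toMatrix_toPEquiv,
    submatrix_submatrix, Function.comp_id, Function.id_comp, submatrix_single_equiv,
    Equiv.symm_symm, Equiv.Perm.inv_def]

lemma omega_isPrimitiveRoot (n : ℕ) [NeZero n] : IsPrimitiveRoot (omega n) n :=
  Complex.isPrimitiveRoot_exp n (NeZero.ne n)

section Concrete

variable {n : ℕ} [NeZero n]

lemma wM_eq_permMatrix : wM n = (Equiv.addRight (1 : Fin n)).permMatrix ℂ := by
  ext a b
  simp [wM, PEquiv.toMatrix_apply, eq_comm]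

lemma wM_pow (m : ℕ) : wM n ^ m = (Equiv.addRight (m • 1 : Fin n)).permMatrix ℂ := by
  induction m with
  | zero => rw [pow_zero, zero_smul, Equiv.addRight_zero, permMatrix_one]
  | succ m ih =>
    rw [pow_succ, ih, wM_eq_permMatrix, ← permMatrix_mul, ← Equiv.addRight_add, succ_nsmul]

lemma wM_pow_val (k : Fin n) : wM n ^ (k : ℕ) = (Equiv.addRight k).permMatrix ℂ := by
  open Fin.NatCast in rw [wM_pow, nsmul_one, Fin.cast_val_eq_self]

lemma wM_pow_card : wM n ^ n = 1 := by
  have h : n • (1 : Fin n) = 0 := by simpa using card_nsmul_eq_zero (G := Fin n) (x := 1)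
  rw [wM_pow, h, Equiv.addRight_zero, permMatrix_one]

lemma star_wM_mul_wM : star (wM n) * wM n = 1 := by
  rw [wM_eq_permMatrix, star_eq_conjTranspose, conjTranspose_permMatrix, ← permMatrix_mul,
    mul_inv_cancel, permMatrix_one]

lemma fM_eq_spectralProj (k : Fin n) : fM n k = spectralProj n (wM n) (omega n) k := by
  rw [fM, spectralProj, powAverage,
    Fin.sum_univ_eq_sum_range (fun j => (omega n ^ (j * k))⁻¹ • wM n ^ j)]
  congr 2 with j
  rw [smul_pow, inv_pow, ← pow_mul, mul_comm]

lemma fM_mul_conjTranspose_fM (i j : Fin n) :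
    fM n i * (fM n j)ᴴ = if i = j then fM n i else 0 := by
  have hn := NeZero.ne n
  have hζ := omega_isPrimitiveRoot n
  have hself : (fM n j)ᴴ = fM n j := by
    rw [← star_eq_conjTranspose, fM_eq_spectralProj]
    exact isSelfAdjoint_spectralProj hn wM_pow_card hζ.pow_eq_one star_wM_mul_wM j
  rw [hself]
  split_ifs with hij
  · rw [hij, fM_eq_spectralProj, spectralProj_mul_self hn wM_pow_card hζ.pow_eq_one]
  · rw [fM_eq_spectralProj, fM_eq_spectralProj]
    exact spectralProj_mul_spectralProj_of_ne hn wM_pow_card hζ i.isLt j.isLt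
      (Fin.val_ne_of_ne hij)

lemma wM_pow_mul_eM_mul_conjTranspose (j k : Fin n) :
    wM n ^ (k : ℕ) * eM n j * (wM n ^ (k : ℕ))ᴴ = eM n (j - k) := by
  rw [wM_pow_val, eM, permMatrix_mul_single_mul_conjTranspose, eM]
  simp [sub_eq_add_neg]

end Concrete

theorem statement11_general (n : ℕ) [NeZero n] :
    (∀ x : Matrix (Fin n) (Fin n) ℂ,
        vM n * (x ⊗ₖ (1 : Matrix (Fin n) (Fin n) ℂ)) * (vM n)ᴴ =
          ∑ k : Fin n, (wM n ^ (k : ℕ) * x * (wM n ^ (k : ℕ))ᴴ) ⊗ₖ fM n k) ∧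
      ∀ j : Fin n,
        vM n * (eM n j ⊗ₖ (1 : Matrix (Fin n) (Fin n) ℂ)) * (vM n)ᴴ =
          ∑ k : Fin n, eM n (j - k) ⊗ₖ fM n k := by
  have hconj := sum_kronecker_conj_kronecker_one (fun k : Fin n => wM n ^ (k : ℕ)) (fM n)
    fM_mul_conjTranspose_fM
  refine ⟨hconj, fun j => ?_⟩
  simp only [vM, hconj, wM_pow_mul_eM_mul_conjTranspose]

/-- for every `x ∈ M_n(ℂ)`,
`v (x ⊗ₖ 1) vᴴ = Σ_k (w^k x (w^k)ᴴ) ⊗ₖ f_k`; in particular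
`v (e_j ⊗ₖ 1) vᴴ = Σ_k e_{j-k} ⊗ₖ f_k` for every `j`. -/
theorem statement11 (n : ℕ) [NeZero n] (hn : 2 ≤ n) :
    (∀ x : Matrix (Fin n) (Fin n) ℂ,
        vM n * (x ⊗ₖ (1 : Matrix (Fin n) (Fin n) ℂ)) * (vM n)ᴴ =
          ∑ k : Fin n, (wM n ^ (k : ℕ) * x * (wM n ^ (k : ℕ))ᴴ) ⊗ₖ fM n k) ∧
      ∀ j : Fin n,
        vM n * (eM n j ⊗ₖ (1 : Matrix (Fin n) (Fin n) ℂ)) * (vM n)ᴴ =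
          ∑ k : Fin n, eM n (j - k) ⊗ₖ fM n k :=
  statement11_general n
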